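/- Let r ∈ ℝ. In ℝ[[X]] let F have constant term 0 and be the compositional inverse of X·(1 + (2r−1)X + r(r−1)X²)⁻¹, and let G = (1 + r(1−r)X²)·(1 + (2r−1)X + r(r−1)X²)⁻¹. Then for every n ∈ ℕ, the coefficient of Xⁿ in (G∘F)⁻¹ equals the shifted Legendre polynomial value P̃_n(r) = ∑_{k=0}^{n} (−1)^{n−k}·C(n+k,2k)·C(2k,k)·rᵏ. That is, the first column of the inverse of the Riordan array (G, X·(1 + (2r−1)X + r(r−1)X²)⁻¹) consists of the shifted Legendre polynomials evaluated at r. -/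

import Mathlib

/-- Substitution (composition) of formal power series: `psComp h u = h ∘ u`,
the series obtained by substituting `u` (with zero constant term) into `h`. -/
noncomputable def psComp (h u : PowerSeries ℝ) : PowerSeries ℝ :=
  PowerSeries.mk fun n =>
    ∑ k ∈ Finset.range (n + 1), PowerSeries.coeff k h * PowerSeries.coeff n (u ^ k)

/-!
Substituting `F` is a ring homomorphism, so with `A = 1 + (2r-1)X + r(r-1)X²` and `s = A⁻¹ ∘ F`
the hypotheses read `F s = X` and `(A ∘ F) s = 1`; hence `F = X (A ∘ F)`, and `H = (G ∘ F)⁻¹`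
satisfies `H (1 + r(1-r)F²) s = 1`. Eliminating `F` and `s` leaves `H² (1 - 2tX + X²) = 1` with
`t = 2r - 1`, i.e. `H` is the generating function `(1 - 2tX + X²)^(-1/2)` of the Legendre
polynomials `P_n(t) = P̃_n(r)`. Differentiating gives Bonnet's recurrence
`(n+1) h_{n+1} + n h_{n-1} = (2n+1) t h_n` for its coefficients, and the explicit sums satisfy the
same recurrence coefficientwise in `r`, by an identity between products of binomial coefficients.
-/

open PowerSeries Finset
open scoped Nat

theorem psComp_eq_subst {u : ℝ⟦X⟧} (hu : constantCoeff u = 0) (h : ℝ⟦X⟧) :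
    psComp h u = h.subst u := by
  ext n
  rw [psComp, coeff_mk, coeff_subst' (HasSubst.of_constantCoeff_zero' hu),
    finsum_eq_sum_of_support_subset (s := range (n + 1))]
  · simp only [smul_eq_mul]
  · intro k hk
    by_contra hkn
    refine hk (smul_eq_zero_of_right _ (coeff_of_lt_order _ ?_))
    exact lt_of_lt_of_le (by simpa using hkn) (le_order_pow_of_constantCoeff_eq_zero k hu)

noncomputable def psCompAlgHom {u : ℝ⟦X⟧} (hu : constantCoeff u = 0) : ℝ⟦X⟧ →ₐ[ℝ] ℝ⟦X⟧ :=
  substAlgHom (HasSubst.of_constantCoeff_zero' hu)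

theorem psComp_eq_psCompAlgHom {u : ℝ⟦X⟧} (hu : constantCoeff u = 0) (h : ℝ⟦X⟧) :
    psComp h u = psCompAlgHom hu h := by
  rw [psComp_eq_subst hu, psCompAlgHom, coe_substAlgHom]

theorem psCompAlgHom_X {u : ℝ⟦X⟧} (hu : constantCoeff u = 0) : psCompAlgHom hu X = u := by
  rw [psCompAlgHom, coe_substAlgHom, subst_X (HasSubst.of_constantCoeff_zero' hu)]

theorem psCompAlgHom_C {u : ℝ⟦X⟧} (hu : constantCoeff u = 0) (c : ℝ) :
    psCompAlgHom hu (C c) = C c := by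
  simpa [PowerSeries.algebraMap_apply] using (psCompAlgHom hu).commutes c

/-- `∑ k ∈ range (n + 1), legendreCoeff n k * y ^ k` is the Legendre polynomial `P_n(1 + 2y)`. -/
def legendreCoeff (n k : ℕ) : ℕ := (n + k).choose (2 * k) * (2 * k).choose k

theorem legendreCoeff_mul_factorial_mul_factorial (n k : ℕ) :
    legendreCoeff n k * (k ! * k !) = (n + k).descFactorial (2 * k) := by
  have hc : (2 * k).choose k * k ! * k ! = (2 * k)! := by
    simpa [two_mul] using Nat.choose_mul_factorial_mul_factorial (Nat.le_add_left k k)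
  rw [legendreCoeff, Nat.descFactorial_eq_factorial_mul_choose, ← hc]
  ring

theorem descPochhammer_succ_eval_add_one {S : Type*} [CommRing S] (n : ℕ) (x : S) :
    (descPochhammer S (n + 1)).eval (x + 1) = (x + 1) * (descPochhammer S n).eval x := by
  simp [descPochhammer_succ_left]

theorem legendreCoeff_succ_succ (n k : ℕ) :
    (n + 2) * legendreCoeff (n + 2) (k + 1) + (n + 1) * legendreCoeff n (k + 1) =
      (2 * n + 3) * (legendreCoeff (n + 1) (k + 1) + 2 * legendreCoeff (n + 1) k) := by
  have hq (m j : ℕ) : (legendreCoeff m j : ℚ) * (j ! * j !) =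
      (descPochhammer ℚ (2 * j)).eval ((m : ℚ) + j) := by
    rw [← Nat.cast_add, descPochhammer_eval_eq_descFactorial,
      ← legendreCoeff_mul_factorial_mul_factorial]
    push_cast; ring
  -- peeling factors off either end turns all four descending factorials into
  -- `(descPochhammer ℚ (2 * k)).eval x` times a polynomial in `x`
  set x : ℚ := n + 1 + k
  have h2k : 2 * (k + 1) = 2 * k + 1 + 1 := by ring
  have h1 := hq (n + 2) (k + 1)
  rw [h2k, show ((n + 2 : ℕ) : ℚ) + (k + 1 : ℕ) = x + 1 + 1 by push_cast; ring,
    descPochhammer_succ_eval_add_one, descPochhammer_succ_eval_add_one] at h1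
  have h2 := hq n (k + 1)
  rw [h2k, show (n : ℚ) + (k + 1 : ℕ) = x by push_cast; ring,
    descPochhammer_succ_eval, descPochhammer_succ_eval] at h2
  have h3 := hq (n + 1) (k + 1)
  rw [h2k, show ((n + 1 : ℕ) : ℚ) + (k + 1 : ℕ) = x + 1 by push_cast; ring,
    descPochhammer_succ_eval_add_one, descPochhammer_succ_eval] at h3
  have h4 := hq (n + 1) k
  rw [show ((n + 1 : ℕ) : ℚ) + k = x by push_cast; ring] at h4
  have hfact : ((k + 1)! : ℚ) = (k + 1) * k ! := by push_cast [Nat.factorial_succ]; ring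
  rw [hfact] at h1 h2 h3
  apply Nat.cast_injective (R := ℚ)
  apply mul_right_cancel₀ (b := ((k + 1) * k ! * ((k + 1) * k !) : ℚ)) (by positivity)
  push_cast at h1 h2 h3 h4 ⊢
  linear_combination (n + 2 : ℚ) * h1 + (n + 1 : ℚ) * h2 - (2 * n + 3 : ℚ) * h3
    - 2 * (2 * n + 3 : ℚ) * (k + 1) ^ 2 * h4

theorem legendreCoeff_eq_zero_of_lt {n k : ℕ} (h : n < k) : legendreCoeff n k = 0 := by
  rw [legendreCoeff, Nat.choose_eq_zero_of_lt (by omega), zero_mul]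

@[simp]
theorem legendreCoeff_zero_right (n : ℕ) : legendreCoeff n 0 = 1 := by
  simp [legendreCoeff]

section
variable {R : Type*} [CommRing R]

theorem sum_legendreCoeff_mul_pow_eq {n N : ℕ} (h : n < N) (y : R) :
    ∑ k ∈ range (n + 1), (legendreCoeff n k : R) * y ^ k =
      ∑ k ∈ range N, (legendreCoeff n k : R) * y ^ k := by
  refine sum_subset (range_subset_range.mpr h) fun k _ hk => ?_
  rw [legendreCoeff_eq_zero_of_lt (by simpa using hk), Nat.cast_zero, zero_mul]

theorem sum_legendreCoeff_mul_pow_succ_succ (n : ℕ) (y : R) :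
    (n + 2) * ∑ k ∈ range (n + 3), (legendreCoeff (n + 2) k : R) * y ^ k
      + (n + 1) * ∑ k ∈ range (n + 1), (legendreCoeff n k : R) * y ^ k =
      (2 * n + 3) * (1 + 2 * y) * ∑ k ∈ range (n + 2), (legendreCoeff (n + 1) k : R) * y ^ k := by
  have hterm (k : ℕ) :
      (n + 2) * (legendreCoeff (n + 2) (k + 1) : R) + (n + 1) * legendreCoeff n (k + 1) =
        (2 * n + 3) * (legendreCoeff (n + 1) (k + 1) + 2 * legendreCoeff (n + 1) k) := by
    exact_mod_cast congrArg (Nat.cast : ℕ → R) (legendreCoeff_succ_succ n k)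
  have hyS : y * ∑ k ∈ range (n + 2), (legendreCoeff (n + 1) k : R) * y ^ k =
      ∑ k ∈ range (n + 2), (legendreCoeff (n + 1) k : R) * y ^ (k + 1) := by
    rw [mul_sum]; exact sum_congr rfl fun k _ => by ring
  have hS : ∑ k ∈ range (n + 2), (legendreCoeff (n + 1) k : R) * y ^ k =
      ∑ k ∈ range (n + 2), (legendreCoeff (n + 1) (k + 1) : R) * y ^ (k + 1) + 1 := by
    rw [sum_legendreCoeff_mul_pow_eq (show n + 1 < n + 3 by omega), sum_range_succ']
    simp
  have hsplit : ∑ k ∈ range (n + 2), (2 * n + 3) *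
        ((legendreCoeff (n + 1) (k + 1) : R) + 2 * legendreCoeff (n + 1) k) * y ^ (k + 1) =
      (2 * n + 3) * (∑ k ∈ range (n + 2), (legendreCoeff (n + 1) (k + 1) : R) * y ^ (k + 1)
        + 2 * ∑ k ∈ range (n + 2), (legendreCoeff (n + 1) k : R) * y ^ (k + 1)) := by
    simp only [mul_sum, ← sum_add_distrib]
    exact sum_congr rfl fun k _ => by ring
  rw [sum_legendreCoeff_mul_pow_eq (show n < n + 3 by omega), mul_sum, mul_sum,
    ← sum_add_distrib, sum_range_succ']
  simp only [← mul_assoc, ← add_mul, hterm, hsplit, legendreCoeff_zero_right]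
  linear_combination -(2 * n + 3 : R) * (hS + 2 * hyS)

def shiftedLegendre (n : ℕ) (x : R) : R :=
  ∑ k ∈ range (n + 1),
    (-1) ^ (n - k) * ((n + k).choose (2 * k) : R) * ((2 * k).choose k : R) * x ^ k

theorem shiftedLegendre_eq_neg_one_pow_mul (n : ℕ) (x : R) :
    shiftedLegendre n x = (-1) ^ n * ∑ k ∈ range (n + 1), (legendreCoeff n k : R) * (-x) ^ k := by
  rw [shiftedLegendre, mul_sum]
  refine sum_congr rfl fun k hk => ?_
  obtain ⟨m, rfl⟩ := Nat.exists_eq_add_of_le (Nat.lt_succ_iff.mp (mem_range.mp hk))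
  have hsq : ((-1 : R) ^ k) ^ 2 = 1 := by rw [← pow_mul, pow_mul']; simp
  rw [Nat.add_sub_cancel_left, legendreCoeff, neg_pow, pow_add]
  push_cast
  linear_combination
    (-(-1 : R) ^ m * ((k + m + k).choose (2 * k) : R) * ((2 * k).choose k : R) * x ^ k) * hsq

@[simp]
theorem shiftedLegendre_zero (x : R) : shiftedLegendre 0 x = 1 := by
  simp [shiftedLegendre]

theorem shiftedLegendre_one (x : R) : shiftedLegendre 1 x = 2 * x - 1 := by
  simp [shiftedLegendre, sum_range_succ]
  ring

theorem shiftedLegendre_succ_succ (n : ℕ) (x : R) :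
    (n + 2) * shiftedLegendre (n + 2) x + (n + 1) * shiftedLegendre n x =
      (2 * n + 3) * (2 * x - 1) * shiftedLegendre (n + 1) x := by
  simp only [shiftedLegendre_eq_neg_one_pow_mul]
  linear_combination (-1 : R) ^ n * sum_legendreCoeff_mul_pow_succ_succ n (-x)

end

section
variable {R : Type*} [CommRing R] {t : R} {H : R⟦X⟧}

theorem coeff_one_of_derivative_eq
    (h : (1 - C (2 * t) * X + X ^ 2) * d⁄dX R H = (C t - X) * H) :
    coeff 1 H = t * coeff 0 H := by
  have h0 := congrArg (coeff 0) h
  simp only [sub_mul, add_mul, one_mul, pow_two, mul_assoc, map_add, map_sub, coeff_C_mul,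
    coeff_zero_X_mul, coeff_derivative] at h0
  linear_combination h0

theorem coeff_succ_succ_of_derivative_eq
    (h : (1 - C (2 * t) * X + X ^ 2) * d⁄dX R H = (C t - X) * H) (n : ℕ) :
    (n + 2) * coeff (n + 2) H + (n + 1) * coeff n H = (2 * n + 3) * t * coeff (n + 1) H := by
  have h1 := congrArg (coeff (n + 1)) h
  rcases n with _ | n
  all_goals
    simp only [sub_mul, add_mul, one_mul, pow_two, mul_assoc, map_add, map_sub, coeff_C_mul,
      coeff_succ_X_mul, coeff_zero_X_mul, coeff_derivative] at h1
    push_cast at h1 ⊢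
    linear_combination h1

end

section
variable {K : Type*} [Field K] [CharZero K]

theorem derivative_eq_of_sq_mul_eq_one {t : K} {H : K⟦X⟧}
    (hH : H ^ 2 * (1 - C (2 * t) * X + X ^ 2) = 1) :
    (1 - C (2 * t) * X + X ^ 2) * d⁄dX K H = (C t - X) * H := by
  have hderiv : d⁄dX K (H ^ 2 * (1 - C (2 * t) * X + X ^ 2)) = 0 := by
    rw [hH, derivative_one]
  simp only [Derivation.leibniz, Derivation.leibniz_pow, map_add, map_sub, derivative_one,
    derivative_C, derivative_X, smul_eq_mul, nsmul_eq_mul] at hderiv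
  have h2H : 2 * H ≠ 0 := mul_ne_zero (by simp [← map_ofNat C 2]) (by rintro rfl; simp at hH)
  refine mul_left_cancel₀ h2H ?_
  rw [map_mul, map_ofNat] at hderiv ⊢
  linear_combination hderiv

theorem coeff_eq_shiftedLegendre_of_sq_mul_eq_one {x : K} {H : K⟦X⟧}
    (hH : H ^ 2 * (1 - C (2 * (2 * x - 1)) * X + X ^ 2) = 1) (h0 : constantCoeff H = 1) (n : ℕ) :
    coeff n H = shiftedLegendre n x := by
  have hode := derivative_eq_of_sq_mul_eq_one hH
  induction n using Nat.twoStepInduction with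
  | zero => simp [h0]
  | one =>
    rw [coeff_one_of_derivative_eq hode, coeff_zero_eq_constantCoeff_apply, h0,
      shiftedLegendre_one, mul_one]
  | more n ih₀ ih₁ =>
    have hcoeff := coeff_succ_succ_of_derivative_eq hode n
    rw [ih₀, ih₁] at hcoeff
    refine mul_left_cancel₀ (by norm_cast : (n + 2 : K) ≠ 0) ?_
    linear_combination hcoeff - shiftedLegendre_succ_succ n x

end

theorem sq_mul_eq_one_of_riordan {R : Type*} [CommRing R] {r : R} {F s H : R⟦X⟧}
    (hFs : F * s = X) (hBs : (1 + C (2 * r - 1) * F + C (r * (r - 1)) * F ^ 2) * s = 1)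
    (hH : H * ((1 + C (r * (1 - r)) * F ^ 2) * s) = 1) :
    H ^ 2 * (1 - C (2 * (2 * r - 1)) * X + X ^ 2) = 1 := by
  simp only [map_sub, map_mul, map_one, map_ofNat] at hBs hH ⊢
  have hFXB : F = X * (1 + (2 * C r - 1) * F + C r * (C r - 1) * F ^ 2) := by
    linear_combination (1 + (2 * C r - 1) * F + C r * (C r - 1) * F ^ 2) * hFs - F * hBs
  have hBD : (1 + (2 * C r - 1) * F + C r * (C r - 1) * F ^ 2) ^ 2
      * (1 - 2 * (2 * C r - 1) * X + X ^ 2) = (1 + C r * (1 - C r) * F ^ 2) ^ 2 := by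
    linear_combination (2 * (2 * C r - 1) * (1 + (2 * C r - 1) * F + C r * (C r - 1) * F ^ 2)
      - X * (1 + (2 * C r - 1) * F + C r * (C r - 1) * F ^ 2) - F) * hFXB
  generalize 1 + (2 * C r - 1) * F + C r * (C r - 1) * F ^ 2 = B at hBs hBD
  generalize 1 - 2 * (2 * C r - 1) * X + X ^ 2 = D at hBD ⊢
  generalize 1 + C r * (1 - C r) * F ^ 2 = E at hBD hH
  linear_combination (-(H ^ 2) * D * (B * s + 1)) * hBs + (H * s) ^ 2 * hBD + (H * E * s + 1) * hH

/-- The first column of the inverse of the Riordan array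
`((1+r(1−r)x²)/(1+(2r−1)x+r(r−1)x²), x/(1+(2r−1)x+r(r−1)x²))`, whose generating
function is `1/(G∘F)`, consists of the shifted Legendre polynomials evaluated at `r`. -/
theorem shifted_legendre_as_moments (r : ℝ) (F G : PowerSeries ℝ)
    (hF0 : PowerSeries.constantCoeff F = 0)
    (hF : psComp
      (PowerSeries.X * (1 + PowerSeries.C (2 * r - 1) * PowerSeries.X +
        PowerSeries.C (r * (r - 1)) * PowerSeries.X ^ 2)⁻¹) F = PowerSeries.X)
    (hG : G = (1 + PowerSeries.C (r * (1 - r)) * PowerSeries.X ^ 2) *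
      (1 + PowerSeries.C (2 * r - 1) * PowerSeries.X +
        PowerSeries.C (r * (r - 1)) * PowerSeries.X ^ 2)⁻¹) :
    ∀ n : ℕ, PowerSeries.coeff n (psComp G F)⁻¹ =
      ∑ k ∈ Finset.range (n + 1),
        (-1 : ℝ) ^ (n - k) * ((n + k).choose (2 * k) : ℝ) * ((2 * k).choose k : ℝ) * r ^ k := by
  obtain ⟨A, hA⟩ : ∃ A : ℝ⟦X⟧, A = 1 + C (2 * r - 1) * X + C (r * (r - 1)) * X ^ 2 := ⟨_, rfl⟩
  rw [← hA] at hF hG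
  have hA0 : constantCoeff A ≠ 0 := by simp [hA]
  have hσA : psCompAlgHom hF0 A = 1 + C (2 * r - 1) * F + C (r * (r - 1)) * F ^ 2 := by
    simp [hA, psCompAlgHom_X, psCompAlgHom_C]
  have hBs := congrArg (psCompAlgHom hF0) (PowerSeries.mul_inv_cancel A hA0)
  rw [map_mul, map_one, hσA] at hBs
  rw [psComp_eq_psCompAlgHom hF0, map_mul, psCompAlgHom_X] at hF
  have hM : psComp G F = (1 + C (r * (1 - r)) * F ^ 2) * psCompAlgHom hF0 A⁻¹ := by
    simp [psComp_eq_psCompAlgHom hF0, hG, psCompAlgHom_X, psCompAlgHom_C]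
  have hs0 : constantCoeff (psCompAlgHom hF0 A⁻¹) = 1 := by
    simpa [hF0] using congrArg constantCoeff hBs
  have hM0 : constantCoeff (psComp G F) = 1 := by simp [hM, hF0, hs0]
  intro n
  refine coeff_eq_shiftedLegendre_of_sq_mul_eq_one ?_ (by simp [hM0]) n
  exact sq_mul_eq_one_of_riordan hF hBs (hM ▸ PowerSeries.inv_mul_cancel _ (by simp [hM0]))
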